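/- (ℓ∞ expander routing.) Let G = (V, E, w) be a weighted undirected φ-expander for some φ ∈ (0, 1), with weighted degrees deg(v) = Σ_{e∈E, v∈e} w_e, and fix an arbitrary orientation of E giving the edge–vertex transfer matrix B ∈ {−1,0,1}^{E×V}. Let d ∈ ℝ^V be a demand vector satisfying Σ_{v∈V} d_v = 0 and |d_v| ≤ deg(v) for every v ∈ V. Then there exists a flow f ∈ ℝ^E with Bᵀ f = d and |f_e| ≤ w_e / φ for every e ∈ E, i.e., ‖W^{-1} f‖_∞ ≤ φ^{-1} where W = diag(w). -/

import Mathlib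

open Matrix BigOperators

noncomputable section

/-- The 0/1 indicator matrix of a map from (edge) indices to vertices:
row `e` is the indicator of the vertex `f e`. -/
def indMat {E V : Type*} [DecidableEq V] (f : E → V) : Matrix E V ℝ :=
  Matrix.of fun e v => if f e = v then (1 : ℝ) else 0

/-- The edge–vertex transfer matrix `B = H - T` of a directed graph with head map `hd`
and tail map `tl`. -/
def transMat {E V : Type*} [DecidableEq V] (hd tl : E → V) : Matrix E V ℝ :=
  indMat hd - indMat tl

/-- The directed Laplacian `Bᵀ W H`. -/
def dirLap {E V : Type*} [Fintype E] [DecidableEq E] [DecidableEq V]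
    (hd tl : E → V) (w : E → ℝ) : Matrix V V ℝ :=
  (transMat hd tl)ᵀ * Matrix.diagonal w * indMat hd

/-- The undirected Laplacian `Bᵀ W B` of the corresponding undirected graph. -/
def undLap {E V : Type*} [Fintype E] [DecidableEq E] [DecidableEq V]
    (hd tl : E → V) (w : E → ℝ) : Matrix V V ℝ :=
  (transMat hd tl)ᵀ * Matrix.diagonal w * transMat hd tl

/-- The corresponding undirected (simple) graph of a weighted directed graph:
`u ~ v` iff `u ≠ v` and some edge of positive weight joins them (in either direction). -/
def undSG {E V : Type*} (hd tl : E → V) (w : E → ℝ) : SimpleGraph V :=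
  SimpleGraph.fromRel (fun u v => ∃ e, 0 < w e ∧ hd e = u ∧ tl e = v)

/-- Directed Laplacian for a graph whose edges are indexed by pairs of vertices. -/
def dirLapP {V : Type*} [Fintype V] [DecidableEq V] (w : V × V → ℝ) : Matrix V V ℝ :=
  dirLap Prod.fst Prod.snd w

/-- Undirected Laplacian for a graph whose edges are indexed by pairs of vertices. -/
def undLapP {V : Type*} [Fintype V] [DecidableEq V] (w : V × V → ℝ) : Matrix V V ℝ :=
  undLap Prod.fst Prod.snd w

/-- Corresponding undirected graph for edges indexed by pairs of vertices. -/
def undSGP {V : Type*} (w : V × V → ℝ) : SimpleGraph V :=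
  undSG Prod.fst Prod.snd w

/-- `B` is a Moore–Penrose pseudoinverse of `A`. -/
def IsMPInv {V : Type*} [Fintype V] (A B : Matrix V V ℝ) : Prop :=
  A * B * A = A ∧ B * A * B = B ∧ (A * B)ᵀ = A * B ∧ (B * A)ᵀ = B * A

open Classical in
/-- The Moore–Penrose pseudoinverse of a (square, real) matrix. -/
noncomputable def mpinv {V : Type*} [Fintype V] (A : Matrix V V ℝ) : Matrix V V ℝ :=
  if h : ∃ B, IsMPInv A B then h.choose else 0

open Classical in
/-- The PSD square root of a positive semidefinite matrix (junk value `0` otherwise). -/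
noncomputable def psdSqrt {V : Type*} [Fintype V] [DecidableEq V] (A : Matrix V V ℝ) :
    Matrix V V ℝ :=
  if h : A.PosSemidef then
    (h.1.eigenvectorUnitary.1 * diagonal ((↑) ∘ (√·) ∘ h.1.eigenvalues) *
      (star h.1.eigenvectorUnitary : Matrix V V ℝ))
  else 0

/-- `A^{†/2} = (A†)^{1/2} = (A^{1/2})†` for a PSD matrix `A`. -/
noncomputable def pinvSqrt {V : Type*} [Fintype V] [DecidableEq V] (A : Matrix V V ℝ) :
    Matrix V V ℝ :=
  mpinv (psdSqrt A)

/-- The ℓ₂→ℓ₂ (spectral) operator norm of `A` is at most `c`. -/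
def l2OpNormLE {m n : Type*} [Fintype m] [Fintype n] (A : Matrix m n ℝ) (c : ℝ) : Prop :=
  ∀ (x : m → ℝ) (y : n → ℝ),
    |x ⬝ᵥ A.mulVec y| ≤ c * Real.sqrt (∑ i, x i ^ 2) * Real.sqrt (∑ j, y j ^ 2)

/-- `|xᵀ A y| ≤ ε √((xᵀ L x)(yᵀ L y))` for all vectors `x, y`. -/
def bilinApprox {V : Type*} [Fintype V] (A L : Matrix V V ℝ) (ε : ℝ) : Prop :=
  ∀ x y : V → ℝ,
    |x ⬝ᵥ A.mulVec y| ≤ ε * Real.sqrt ((x ⬝ᵥ L.mulVec x) * (y ⬝ᵥ L.mulVec y))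

/-- Schur complement of a `(V ⊕ X) × (V ⊕ X)` matrix onto the `V`-block. -/
def schurInl {V X : Type*} [Fintype V] [Fintype X] (A : Matrix (V ⊕ X) (V ⊕ X) ℝ) :
    Matrix V V ℝ :=
  A.submatrix Sum.inl Sum.inl -
    A.submatrix Sum.inl Sum.inr * mpinv (A.submatrix Sum.inr Sum.inr) *
      A.submatrix Sum.inr Sum.inl

/-- Weighted degree of a vertex (each edge incident to `v` counted once). -/
def wDeg {E V : Type*} [Fintype E] [DecidableEq V] (hd tl : E → V) (w : E → ℝ) (v : V) : ℝ :=
  ∑ e, if hd e = v ∨ tl e = v then w e else 0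

/-- Volume of a vertex set: total weighted degree. -/
def volW {E V : Type*} [Fintype E] [DecidableEq V] (hd tl : E → V) (w : E → ℝ)
    (S : Finset V) : ℝ :=
  ∑ v ∈ S, wDeg hd tl w v

/-- Total weight of edges crossing the cut `(S, V ∖ S)` (in either direction). -/
def cutWt {E V : Type*} [Fintype E] [DecidableEq V] (hd tl : E → V) (w : E → ℝ) (S : Finset V) : ℝ :=
  ∑ e, if (hd e ∈ S ∧ tl e ∉ S) ∨ (hd e ∉ S ∧ tl e ∈ S) then w e else 0

/-- `G` is a `φ`-expander: every nontrivial cut has weight at least `φ` times the smaller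
side's volume. -/
def IsExpander {E V : Type*} [Fintype E] [Fintype V] [DecidableEq V]
    (hd tl : E → V) (w : E → ℝ) (φ : ℝ) : Prop :=
  ∀ S : Finset V, S.Nonempty → S ≠ Finset.univ →
    φ * min (volW hd tl w S) (volW hd tl w Sᶜ) ≤ cutWt hd tl w S

section AuxProof

variable {V Ed : Type*} [Fintype V] [DecidableEq V] [Fintype Ed] [DecidableEq Ed]

lemma aux_dot_transMat (hd tl : Ed → V) (f : Ed → ℝ) (y : V → ℝ) :
    ∑ v, ((transMat hd tl)ᵀ.mulVec f) v * y v = ∑ e, f e * (y (hd e) - y (tl e)) := by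
  simp only [Matrix.mulVec, dotProduct, Matrix.transpose_apply, transMat, indMat,
    Matrix.sub_apply, Matrix.of_apply, Finset.sum_mul, sub_mul]
  rw [Finset.sum_comm]
  refine Finset.sum_congr rfl fun e _ => ?_
  have h1 : ∑ v, (if hd e = v then (1:ℝ) else 0) * f e * y v = f e * y (hd e) := by
    rw [Finset.sum_eq_single (hd e)] <;> simp +contextual [eq_comm]
  have h2 : ∑ v, (if tl e = v then (1:ℝ) else 0) * f e * y v = f e * y (tl e) := by
    rw [Finset.sum_eq_single (tl e)] <;> simp +contextual [eq_comm]
  rw [Finset.sum_sub_distrib, h1, h2, mul_sub]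

lemma aux_dual (hd tl : Ed → V) (w : Ed → ℝ) (hw : ∀ e, 0 ≤ w e)
    (φ : ℝ) (hφ₀ : 0 < φ)
    (hexp : IsExpander hd tl w φ)
    (d : V → ℝ) (hsum : ∑ v, d v = 0) (hdem : ∀ v, |d v| ≤ wDeg hd tl w v) :
    ∀ y : V → ℝ, ∑ v, y v * d v ≤ ∑ e, (w e / φ) * |y (hd e) - y (tl e)| := by
  suffices H : ∀ (n : ℕ) (y : V → ℝ), (Finset.image y Finset.univ).card = n →
      ∑ v, y v * d v ≤ ∑ e, (w e / φ) * |y (hd e) - y (tl e)| by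
    exact fun y => H _ y rfl
  intro n
  induction n using Nat.strong_induction_on with
  | _ n ih =>
  intro y hcard
  have hRnn : ∀ y' : V → ℝ, (0:ℝ) ≤ ∑ e, (w e / φ) * |y' (hd e) - y' (tl e)| :=
    fun y' => Finset.sum_nonneg fun e _ =>
      mul_nonneg (div_nonneg (hw e) hφ₀.le) (abs_nonneg _)
  by_cases hconst : ∀ u v : V, y u = y v
  · rcases isEmpty_or_nonempty V with hV | ⟨⟨v0⟩⟩
    · simpa using hRnn y
    · have h1 : ∑ v, y v * d v = y v0 * ∑ v, d v := by
        rw [Finset.mul_sum]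
        exact Finset.sum_congr rfl fun v _ => by rw [hconst v v0]
      rw [h1, hsum, mul_zero]
      exact hRnn y
  · push_neg at hconst
    obtain ⟨u0, v0, huv⟩ := hconst
    set A : Finset ℝ := Finset.image y Finset.univ with hA
    have hAne : A.Nonempty := ⟨y u0, Finset.mem_image_of_mem y (Finset.mem_univ u0)⟩
    set m1 : ℝ := A.min' hAne with hm1
    have hm1le : ∀ v, m1 ≤ y v := fun v =>
      A.min'_le _ (Finset.mem_image_of_mem y (Finset.mem_univ v))
    have hm1A : m1 ∈ A := A.min'_mem hAne
    have hA'ne : (A.erase m1).Nonempty := by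
      rcases eq_or_ne (y u0) m1 with h | h
      · exact ⟨y v0, Finset.mem_erase.2 ⟨by rw [← h]; exact (Ne.symm huv), Finset.mem_image_of_mem y (Finset.mem_univ v0)⟩⟩
      · exact ⟨y u0, Finset.mem_erase.2 ⟨h, Finset.mem_image_of_mem y (Finset.mem_univ u0)⟩⟩
    set m2 : ℝ := (A.erase m1).min' hA'ne with hm2
    have hm2mem := (A.erase m1).min'_mem hA'ne
    have hm2ne : m2 ≠ m1 := (Finset.mem_erase.1 hm2mem).1
    have hm2A : m2 ∈ A := (Finset.mem_erase.1 hm2mem).2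
    have hm1m2 : m1 < m2 := lt_of_le_of_ne (A.min'_le _ hm2A) (Ne.symm hm2ne)
    set δ : ℝ := m2 - m1 with hδdef
    have hδ : 0 < δ := sub_pos.2 hm1m2
    have hkey : ∀ v, y v = m1 ∨ m2 ≤ y v := by
      intro v
      by_cases h : y v = m1
      · exact .inl h
      · exact .inr ((A.erase m1).min'_le _ (Finset.mem_erase.2
          ⟨h, Finset.mem_image_of_mem y (Finset.mem_univ v)⟩))
    set S : Finset V := Finset.univ.filter (fun v => m1 < y v) with hS
    have hmemS : ∀ v, v ∈ S ↔ m1 < y v := by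
      intro v; simp [hS]
    have hnotS : ∀ v, v ∉ S → y v = m1 := by
      intro v hv
      have := (hmemS v).not.1 hv
      exact le_antisymm (not_lt.1 this) (hm1le v)
    have hinS : ∀ v, v ∈ S → m2 ≤ y v := by
      intro v hv
      rcases hkey v with h | h
      · exact absurd ((hmemS v).1 hv) (by rw [h]; exact lt_irrefl m1)
      · exact h
    set y' : V → ℝ := fun v => if v ∈ S then y v - δ else y v with hy'
    have hdecomp : ∀ v, y v = y' v + (if v ∈ S then δ else 0) := by
      intro v; by_cases h : v ∈ S <;> simp [hy', h]
    have hy'in : ∀ v, v ∈ S → y' v = y v - δ := fun v h => by simp [hy', h]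
    have hy'out : ∀ v, v ∉ S → y' v = m1 := fun v h => by simp [hy', h, hnotS v h]
    have hy'ge : ∀ v, m1 ≤ y' v := by
      intro v
      by_cases h : v ∈ S
      · rw [hy'in v h]; have := hinS v h; simp [hδdef]; linarith
      · rw [hy'out v h]
    -- cardinality decrease
    have hsub : Finset.image y' Finset.univ ⊆ Finset.image (fun a => a - δ) (A.erase m1) := by
      intro a ha
      obtain ⟨v, -, rfl⟩ := Finset.mem_image.1 ha
      by_cases h : v ∈ S
      · refine Finset.mem_image.2 ⟨y v, Finset.mem_erase.2 ⟨?_, Finset.mem_image_of_mem y (Finset.mem_univ v)⟩, (hy'in v h).symm⟩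
        exact ne_of_gt ((hmemS v).1 h)
      · refine Finset.mem_image.2 ⟨m2, hm2mem, ?_⟩
        rw [hy'out v h]; simp [hδdef]
    have hcard' : (Finset.image y' Finset.univ).card < n := by
      calc (Finset.image y' Finset.univ).card
          ≤ (Finset.image (fun a => a - δ) (A.erase m1)).card := Finset.card_le_card hsub
        _ ≤ (A.erase m1).card := Finset.card_image_le
        _ = A.card - 1 := Finset.card_erase_of_mem hm1A
        _ < A.card := Nat.sub_lt hAne.card_pos one_pos
        _ = n := hcard
    have IH := ih _ hcard' y' rfl
    -- S nonempty and proper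
    have hSne : S.Nonempty := by
      obtain ⟨v2, -, hv2⟩ := Finset.mem_image.1 hm2A
      exact ⟨v2, (hmemS v2).2 (by rw [hv2]; exact hm1m2)⟩
    have hSproper : S ≠ Finset.univ := by
      obtain ⟨v1, -, hv1⟩ := Finset.mem_image.1 hm1A
      intro h
      have : v1 ∈ S := h ▸ Finset.mem_univ v1
      exact absurd ((hmemS v1).1 this) (by rw [hv1]; exact lt_irrefl m1)
    -- demand bound
    have hdS_vol : ∑ v ∈ S, d v ≤ volW hd tl w S := by
      refine le_trans (Finset.sum_le_sum fun v _ => (le_abs_self (d v)).trans (hdem v)) ?_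
      exact le_of_eq rfl
    have hdS_volc : ∑ v ∈ S, d v ≤ volW hd tl w Sᶜ := by
      have hsplit : ∑ v ∈ S, d v + ∑ v ∈ Sᶜ, d v = 0 := by
        rw [Finset.sum_add_sum_compl]; exact hsum
      have h1 : ∑ v ∈ S, d v = -∑ v ∈ Sᶜ, d v := by linarith
      have h2 : ∀ v ∈ Sᶜ, -wDeg hd tl w v ≤ d v := fun v _ =>
        (neg_le_neg (hdem v)).trans (neg_abs_le (d v))
      have h3 := Finset.sum_le_sum h2
      rw [Finset.sum_neg_distrib] at h3
      have : volW hd tl w Sᶜ = ∑ v ∈ Sᶜ, wDeg hd tl w v := rfl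
      rw [h1, this]
      linarith
    have hcut := hexp S hSne hSproper
    have hdS_cut : ∑ v ∈ S, d v ≤ cutWt hd tl w S / φ := by
      rw [le_div_iff₀ hφ₀]
      calc (∑ v ∈ S, d v) * φ = φ * ∑ v ∈ S, d v := mul_comm _ _
        _ ≤ φ * min (volW hd tl w S) (volW hd tl w Sᶜ) := by
            apply mul_le_mul_of_nonneg_left _ hφ₀.le
            exact le_min hdS_vol hdS_volc
        _ ≤ cutWt hd tl w S := hcut
    -- LHS decomposition
    have hLHS : ∑ v, y v * d v = ∑ v, y' v * d v + δ * ∑ v ∈ S, d v := by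
      have : ∀ v, y v * d v = y' v * d v + (if v ∈ S then δ * d v else 0) := by
        intro v
        rw [hdecomp v, add_mul]
        congr 1
        split_ifs <;> simp
      rw [Finset.sum_congr rfl fun v _ => this v, Finset.sum_add_distrib]
      congr 1
      rw [Finset.sum_ite_mem, Finset.univ_inter, Finset.mul_sum]
    -- RHS decomposition
    have hterm : ∀ e, |y (hd e) - y (tl e)| =
        |y' (hd e) - y' (tl e)| +
          (if (hd e ∈ S ∧ tl e ∉ S) ∨ (hd e ∉ S ∧ tl e ∈ S) then δ else 0) := by
      intro e
      by_cases h1 : hd e ∈ S <;> by_cases h2 : tl e ∈ S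
      · rw [hy'in _ h1, hy'in _ h2, if_neg (by simp [h1, h2]), add_zero]
        congr 1; ring
      · have p1 : (0:ℝ) ≤ y (hd e) - m1 := by linarith [hinS _ h1, hm1m2]
        have p2 : (0:ℝ) ≤ y (hd e) - δ - m1 := by linarith [hinS _ h1, hδdef]
        rw [hy'in _ h1, hy'out _ h2, hnotS _ h2, if_pos (Or.inl ⟨h1, h2⟩),
          abs_of_nonneg p1, abs_of_nonneg p2]
        ring
      · have p1 : m1 - y (tl e) ≤ 0 := by linarith [hinS _ h2, hm1m2]
        have p2 : m1 - (y (tl e) - δ) ≤ 0 := by linarith [hinS _ h2, hδdef]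
        rw [hy'out _ h1, hy'in _ h2, hnotS _ h1, if_pos (Or.inr ⟨h1, h2⟩),
          abs_of_nonpos p1, abs_of_nonpos p2]
        ring
      · rw [hy'out _ h1, hy'out _ h2, hnotS _ h1, hnotS _ h2, if_neg (by simp [h1, h2]),
          add_zero]
    have hRHS : ∑ e, (w e / φ) * |y (hd e) - y (tl e)| =
        ∑ e, (w e / φ) * |y' (hd e) - y' (tl e)| + (δ / φ) * cutWt hd tl w S := by
      have : ∀ e, (w e / φ) * |y (hd e) - y (tl e)| =
          (w e / φ) * |y' (hd e) - y' (tl e)| +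
            (δ / φ) * (if (hd e ∈ S ∧ tl e ∉ S) ∨ (hd e ∉ S ∧ tl e ∈ S) then w e else 0) := by
        intro e
        rw [hterm e, mul_add]
        congr 1
        split_ifs <;> ring
      rw [Finset.sum_congr rfl fun e _ => this e, Finset.sum_add_distrib]
      congr 1
      rw [cutWt, Finset.mul_sum]
    -- combine
    have hfinal : δ * ∑ v ∈ S, d v ≤ (δ / φ) * cutWt hd tl w S := by
      have h1 : δ * ∑ v ∈ S, d v ≤ δ * (cutWt hd tl w S / φ) :=
        mul_le_mul_of_nonneg_left hdS_cut hδ.le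
      calc δ * ∑ v ∈ S, d v ≤ δ * (cutWt hd tl w S / φ) := h1
        _ = (δ / φ) * cutWt hd tl w S := by ring
    rw [hLHS, hRHS]
    linarith

end AuxProof

/-- ℓ∞ expander routing. -/
theorem stmt_13 {V Ed : Type*} [Fintype V] [DecidableEq V] [Fintype Ed] [DecidableEq Ed]
    (hd tl : Ed → V) (w : Ed → ℝ) (hw : ∀ e, 0 ≤ w e)
    (φ : ℝ) (hφ₀ : 0 < φ) (hφ₁ : φ < 1)
    (hexp : IsExpander hd tl w φ)
    (d : V → ℝ) (hsum : ∑ v, d v = 0) (hdem : ∀ v, |d v| ≤ wDeg hd tl w v) :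
    ∃ f : Ed → ℝ,
      (transMat hd tl)ᵀ.mulVec f = d ∧ ∀ e, |f e| ≤ w e / φ := by
  classical
  set c : Ed → ℝ := fun e => w e / φ with hc
  have hcnn : ∀ e, 0 ≤ c e := fun e => div_nonneg (hw e) hφ₀.le
  set box : Set (Ed → ℝ) := Set.univ.pi fun e => Set.Icc (-(c e)) (c e) with hbox
  set K : Set (V → ℝ) := (Matrix.mulVecLin (transMat hd tl)ᵀ) '' box with hKdef
  suffices hdK : d ∈ K by
    obtain ⟨f, hf, hfd⟩ := hdK
    refine ⟨f, ?_, fun e => ?_⟩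
    · rw [← Matrix.mulVecLin_apply]; exact hfd
    · have := hf e (Set.mem_univ e)
      rw [Set.mem_Icc] at this
      exact abs_le.2 this
  by_contra hdK
  have hKconv : Convex ℝ K :=
    (convex_pi fun e _ => convex_Icc _ _).linear_image (Matrix.mulVecLin (transMat hd tl)ᵀ)
  have hcont : Continuous (Matrix.mulVecLin (transMat hd tl)ᵀ : (Ed → ℝ) →ₗ[ℝ] (V → ℝ)) :=
    LinearMap.continuous_of_finiteDimensional _
  have hKcl : IsClosed K :=
    (((isCompact_univ_pi fun e => isCompact_Icc).image hcont)).isClosed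
  obtain ⟨g, u, hgK, hgd⟩ := geometric_hahn_banach_closed_point hKconv hKcl hdK
  set y : V → ℝ := fun v => g (fun j => if v = j then (1:ℝ) else 0) with hy
  have hgx : ∀ x : V → ℝ, g x = ∑ v, x v * y v := by
    intro x
    have hx := pi_eq_sum_univ x
    calc g x = g (∑ v, x v • fun j => if v = j then (1:ℝ) else 0) := by rw [← hx]
      _ = ∑ v, x v * y v := by
          rw [map_sum]
          exact Finset.sum_congr rfl fun v _ => by rw [_root_.map_smul, smul_eq_mul]
  set fs : Ed → ℝ := fun e => if 0 ≤ y (hd e) - y (tl e) then c e else -(c e) with hfs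
  have hfsbox : fs ∈ box := by
    intro e _
    rw [Set.mem_Icc]
    by_cases h : 0 ≤ y (hd e) - y (tl e) <;>
      simp only [hfs, h, if_true, if_false] <;>
      constructor <;> linarith [hcnn e]
  have hBfs : Matrix.mulVecLin (transMat hd tl)ᵀ fs ∈ K := Set.mem_image_of_mem _ hfsbox
  have hlt : g (Matrix.mulVecLin (transMat hd tl)ᵀ fs) < u := hgK _ hBfs
  have hgB : g (Matrix.mulVecLin (transMat hd tl)ᵀ fs) = ∑ e, c e * |y (hd e) - y (tl e)| := by
    rw [hgx, Matrix.mulVecLin_apply, aux_dot_transMat hd tl fs y]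
    refine Finset.sum_congr rfl fun e _ => ?_
    by_cases h : 0 ≤ y (hd e) - y (tl e)
    · simp only [hfs, h, if_true]
      rw [abs_of_nonneg h]
    · simp only [hfs, h, if_false]
      rw [abs_of_nonpos (le_of_not_ge h)]
      ring
  have hdual := aux_dual hd tl w hw φ hφ₀ hexp d hsum hdem y
  have hgd' : g d = ∑ v, y v * d v := by
    rw [hgx]
    exact Finset.sum_congr rfl fun v _ => mul_comm _ _
  rw [hgB] at hlt
  rw [hgd'] at hgd
  have : ∑ e, c e * |y (hd e) - y (tl e)| = ∑ e, (w e / φ) * |y (hd e) - y (tl e)| := rfl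
  linarith [this ▸ hlt]


end
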